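/- arXiv:1302.6526 — 5 statements merged into one kernel-verified Lean document; each statement's English description precedes it below -/
import Mathlib

section
/- Let R be a commutative ring that is an algebra over ℚ, and let α, β ∈ R. Then there exists a unique formal power series φ ∈ R[[t]] with constant coefficient 0 and coefficient of t equal to 1 (i.e. φ ∈ t + t²·R[[t]]) satisfying the differential equation (1 + α·t − β·φ)·φ′ = 1 + φ, where φ′ denotes the formal derivative of φ. -/
/-!
Comparing coefficients of `tⁿ` turns the equation into
`(n + 1) φₙ₊₁ = [n = 0] + φₙ - α n φₙ + β ∑_{k < n} φₖ₊₁ (n - k) φₙ₋ₖ`, whose right-hand side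
only involves `φ₀, …, φₙ` once `φ₀ = 0`. Since `n + 1` is invertible in a `ℚ`-algebra, the
coefficients are thus the unique fixed point of a causal operator on sequences, and the
coefficient of `t` is forced to be `1` by the case `n = 0`.
-/

open Function Finset PowerSeries

section Causal

variable {α : Type*}

def IsCausal (G : (ℕ → α) → ℕ → α) : Prop :=
  ∀ f g n, (∀ k < n, f k = g k) → G f n = G g n

namespace IsCausal

variable {G : (ℕ → α) → ℕ → α}

theorem eq_of_isFixedPt (hG : IsCausal G) {f g : ℕ → α} (hf : IsFixedPt G f)
    (hg : IsFixedPt G g) : f = g := by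
  funext n
  induction n using Nat.strong_induction_on with
  | _ n ih => rw [← hf, ← hg]; exact hG f g n ih

theorem existsUnique_isFixedPt [Nonempty α] (hG : IsCausal G) : ∃! f, IsFixedPt G f := by
  let f : ℕ → α := Nat.strongRec (motive := fun _ => α) fun n rec =>
    G (fun k => if h : k < n then rec k h else Classical.arbitrary α) n
  have hf : IsFixedPt G f := funext fun n => by
    rw [show f n = _ from Nat.strongRec_eq _ n]
    exact hG _ _ n fun k hk => by simp [f, hk]
  exact ⟨f, hf, fun g hg => hG.eq_of_isFixedPt hg hf⟩

end IsCausal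

end Causal

namespace PowerSeries

variable {R : Type*} [CommRing R]

theorem coeff_X_mul_derivative (f : R⟦X⟧) (n : ℕ) :
    coeff n (X * d⁄dX R f) = n * coeff n f := by
  cases n with
  | zero => simp
  | succ m => rw [coeff_succ_X_mul, coeff_derivative, mul_comm]; push_cast; rfl

theorem coeff_mul_derivative_of_constantCoeff_eq_zero {f : R⟦X⟧} (h0 : coeff 0 f = 0)
    (n : ℕ) :
    coeff n (f * d⁄dX R f) =
      ∑ k ∈ range n, coeff (k + 1) f * ((n - k : ℕ) * coeff (n - k) f) := by
  rw [coeff_mul, Nat.sum_antidiagonal_eq_sum_range_succ_mk, sum_range_succ', h0, zero_mul,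
    add_zero]
  refine sum_congr rfl fun k hk => ?_
  have hnk : n - (k + 1) + 1 = n - k := by have := mem_range.1 hk; omega
  dsimp only
  rw [coeff_derivative, ← Nat.cast_add_one, hnk, mul_comm (coeff (n - k) f)]

end PowerSeries

section Equation

variable {R : Type*} [CommRing R] (α β : R)

/-- The `n`-th coefficient of `1 + φ - α t φ' + β φ φ'` for `φ = ∑ fₖ tᵏ` with `f₀ = 0`. -/
def odeRhs (f : ℕ → R) (n : ℕ) : R :=
  (if n = 0 then 1 else 0) + f n - α * n * f n
    + β * ∑ k ∈ range n, f (k + 1) * ((n - k : ℕ) * f (n - k))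

theorem odeRhs_congr {f g : ℕ → R} {n : ℕ} (h : ∀ k ≤ n, f k = g k) :
    odeRhs α β f n = odeRhs α β g n := by
  unfold odeRhs
  rw [h n le_rfl]
  congr 2
  refine sum_congr rfl fun k hk => ?_
  have := mem_range.1 hk
  rw [h (k + 1) (by omega), h (n - k) (by omega)]

theorem ode_iff_forall_coeff {φ : R⟦X⟧} (h0 : coeff 0 φ = 0) :
    (1 + C α * X - C β * φ) * d⁄dX R φ = 1 + φ ↔
      ∀ n, (n + 1) • coeff (n + 1) φ = odeRhs α β (fun k => coeff k φ) n := by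
  rw [PowerSeries.ext_iff]
  refine forall_congr' fun n => ?_
  rw [sub_mul, add_mul, one_mul, mul_assoc, mul_assoc, map_sub, map_add, coeff_derivative,
    coeff_C_mul, coeff_C_mul, coeff_X_mul_derivative,
    coeff_mul_derivative_of_constantCoeff_eq_zero h0, map_add, coeff_one, odeRhs, nsmul_eq_mul]
  push_cast
  constructor <;> intro h <;> linear_combination h

theorem coeff_one_eq_one_of_ode {φ : R⟦X⟧} (h0 : coeff 0 φ = 0)
    (h : (1 + C α * X - C β * φ) * d⁄dX R φ = 1 + φ) : coeff 1 φ = 1 := by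
  simpa [odeRhs, h0] using (ode_iff_forall_coeff α β h0).1 h 0

variable [Algebra ℚ R]

def odeStep (f : ℕ → R) : ℕ → R
  | 0 => 0
  | n + 1 => ((n + 1 : ℕ) : ℚ)⁻¹ • odeRhs α β f n

theorem isCausal_odeStep : IsCausal (odeStep α β) := by
  rintro f g (_ | n) h
  · rfl
  · exact congrArg _ (odeRhs_congr α β fun k hk => h k (Nat.lt_succ_of_le hk))

theorem isFixedPt_odeStep_coeff_iff (φ : R⟦X⟧) :
    IsFixedPt (odeStep α β) (fun n => coeff n φ) ↔
      coeff 0 φ = 0 ∧ (1 + C α * X - C β * φ) * d⁄dX R φ = 1 + φ := by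
  have hstep (n : ℕ) : odeStep α β (fun k => coeff k φ) (n + 1) = coeff (n + 1) φ ↔
      (n + 1) • coeff (n + 1) φ = odeRhs α β (fun k => coeff k φ) n := by
    rw [odeStep, eq_comm, eq_inv_smul_iff₀ (by positivity), Nat.cast_smul_eq_nsmul]
  rw [IsFixedPt, funext_iff]
  constructor
  · intro h
    have h0 : coeff 0 φ = 0 := (h 0).symm
    exact ⟨h0, (ode_iff_forall_coeff α β h0).2 fun n => (hstep n).1 (h (n + 1))⟩
  · rintro ⟨h0, h⟩ (_ | n)
    · exact h0.symm
    · exact (hstep n).2 ((ode_iff_forall_coeff α β h0).1 h n)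

end Equation

/-- For a commutative `ℚ`-algebra `R` and `α β : R`, there exists a unique
formal power series `φ ∈ t + t²·R[[t]]` (constant coefficient `0`, coefficient of `t` equal
to `1`) satisfying the differential equation `(1 + α·t − β·φ)·φ′ = 1 + φ`. -/
theorem exists_unique_solution_diff_eq
    (R : Type*) [CommRing R] [Algebra ℚ R] (α β : R) :
    ∃! φ : PowerSeries R,
      PowerSeries.coeff 0 φ = 0 ∧ PowerSeries.coeff 1 φ = 1 ∧
      (1 + PowerSeries.C α * PowerSeries.X - PowerSeries.C β * φ) * φ.derivativeFun
        = 1 + φ := by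
  obtain ⟨f, hf, hf_unique⟩ := (isCausal_odeStep α β).existsUnique_isFixedPt
  have hf' : IsFixedPt (odeStep α β) (fun n => coeff n (mk f)) := by
    simpa only [coeff_mk] using hf
  obtain ⟨h0, hode⟩ := (isFixedPt_odeStep_coeff_iff α β (mk f)).1 hf'
  refine ⟨mk f, ⟨h0, coeff_one_eq_one_of_ode α β h0 hode, hode⟩, ?_⟩
  rintro φ ⟨hφ0, -, hφ⟩
  ext n
  rw [coeff_mk, ← hf_unique _ ((isFixedPt_odeStep_coeff_iff α β φ).2 ⟨hφ0, hφ⟩)]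
end

section
/- Let R be a commutative ring that is an algebra over ℚ, let α, β ∈ R, and let a : ℕ → R be a sequence with a₀ = 0. Set φ := Σ_{n≥0} aₙ·tⁿ/n! ∈ R[[t]]. Then φ satisfies the differential equation (1 + α·t − β·φ)·φ′ = 1 + φ if and only if a₁ = 1 and for every n ≥ 1 one has a_{n+1} = (1 − n·α)·aₙ + β·Σ_{k=1}^{n} binom(n,k)·a_k·a_{n+1−k}. -/
/-!
Taking exponential generating functions `a ↦ ∑ aₙ Xⁿ / n!` is an injective `R`-linear map which
turns `d/dX` into the shift `n ↦ aₙ₊₁`, `X · d/dX` into `n ↦ n aₙ`, and products into binomial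
convolutions. So the differential equation is an identity between two sequences: its entry at `0`
says `a₁ = 1`, and its entry at `n ≥ 1` is the recursion, because the `k = 0` term of the
convolution `∑ₖ binom(n,k) aₖ aₙ₊₁₋ₖ` vanishes when `a₀ = 0`.
-/

open Finset PowerSeries

theorem factorial_succ_inv_smul_mul {S : Type*} [Semiring S] [Module ℚ S] (n : ℕ) (x : S) :
    ((n + 1).factorial : ℚ)⁻¹ • (((n : S) + 1) * x) = (n.factorial : ℚ)⁻¹ • x := by
  rw [← Nat.cast_add_one, ← nsmul_eq_mul, ← Nat.cast_smul_eq_nsmul ℚ, smul_smul]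
  congr 1
  rw [Nat.factorial_succ]
  push_cast
  field_simp

namespace PowerSeries

variable {R : Type*} [CommRing R] [Algebra ℚ R]

def egf : (ℕ → R) →ₗ[R] R⟦X⟧ where
  toFun a := mk fun n => (n.factorial : ℚ)⁻¹ • a n
  map_add' a b := by ext n; simp [smul_add]
  map_smul' c a := by ext n; simp

@[simp]
theorem coeff_egf (a : ℕ → R) (n : ℕ) : coeff n (egf a) = (n.factorial : ℚ)⁻¹ • a n :=
  coeff_mk n fun n ↦ (n.factorial : ℚ)⁻¹ • a n

theorem egf_injective : Function.Injective (egf : (ℕ → R) → R⟦X⟧) := fun a b h ↦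
  funext fun n ↦ smul_right_injective R (inv_ne_zero (Nat.cast_ne_zero.2 n.factorial_ne_zero))
    (by simpa using congr(coeff n $h))

theorem egf_single_zero (c : R) : egf (Pi.single 0 c) = C c := by
  ext (_ | n) <;> simp [coeff_C]

theorem derivative_egf (a : ℕ → R) : d⁄dX R (egf a) = egf fun n ↦ a (n + 1) := by
  ext n
  rw [coeff_derivative, coeff_egf, coeff_egf, smul_mul_assoc, mul_comm,
    factorial_succ_inv_smul_mul]

theorem X_mul_egf_succ (a : ℕ → R) : X * egf (fun n ↦ a (n + 1)) = egf fun n ↦ n * a n := by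
  ext (_ | n)
  · simp
  · rw [coeff_succ_X_mul, coeff_egf, coeff_egf, Nat.cast_add_one, factorial_succ_inv_smul_mul]

theorem egf_mul (a b : ℕ → R) :
    egf a * egf b = egf fun n ↦ ∑ p ∈ antidiagonal n, n.choose p.1 * a p.1 * b p.2 := by
  ext n
  rw [coeff_mul, coeff_egf, smul_sum]
  refine sum_congr rfl fun p hp ↦ ?_
  obtain rfl := mem_antidiagonal.1 hp
  rw [coeff_egf, coeff_egf, smul_mul_smul_comm, mul_assoc, ← nsmul_eq_mul,
    ← Nat.cast_smul_eq_nsmul ℚ, smul_smul]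
  congr 1
  rw [Nat.cast_add_choose]
  field_simp

end PowerSeries

theorem sum_antidiagonal_choose_mul_succ {R : Type*} [Semiring R] {a b : ℕ → R} (ha : a 0 = 0)
    (n : ℕ) : ∑ p ∈ antidiagonal n, n.choose p.1 * a p.1 * b (p.2 + 1) =
      ∑ k ∈ Icc 1 n, n.choose k * a k * b (n + 1 - k) := by
  rw [Nat.sum_antidiagonal_eq_sum_range_succ (fun i j ↦ n.choose i * a i * b (j + 1)),
    range_eq_Ico, sum_eq_sum_Ico_succ_bot n.succ_pos, ha, mul_zero, zero_mul, zero_add, zero_add,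
    Nat.succ_eq_add_one, Ico_add_one_right_eq_Icc]
  exact sum_congr rfl fun k hk ↦ by rw [Nat.sub_add_comm (mem_Icc.1 hk).2]

/-- Let `R` be a commutative `ℚ`-algebra, `α β : R`, and `a : ℕ → R` with
`a 0 = 0`. Set `φ := Σ_{n≥0} aₙ·tⁿ/n!`. Then `φ` satisfies `(1 + α·t − β·φ)·φ′ = 1 + φ`
iff `a 1 = 1` and for all `n ≥ 1`,
`a (n+1) = (1 − n·α)·aₙ + β·Σ_{k=1}^{n} binom(n,k)·a_k·a_{n+1−k}`. -/
theorem diff_eq_iff_recursion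
    (R : Type*) [CommRing R] [Algebra ℚ R] (α β : R) (a : ℕ → R) (h0 : a 0 = 0)
    (φ : PowerSeries R)
    (hφ : φ = PowerSeries.mk fun n => ((n.factorial : ℚ)⁻¹ • a n)) :
    ((1 + PowerSeries.C α * PowerSeries.X - PowerSeries.C β * φ) * φ.derivativeFun
        = 1 + φ) ↔
      (a 1 = 1 ∧ ∀ n : ℕ, 1 ≤ n →
        a (n + 1) = (1 - (n : R) * α) * a n +
          β * ∑ k ∈ Finset.Icc 1 n, (n.choose k : R) * a k * a (n + 1 - k)) := by
  obtain rfl : φ = egf a := hφ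
  change (1 + C α * X - C β * egf a) * d⁄dX R (egf a) = 1 + egf a ↔ _
  have hlhs : (1 + C α * X - C β * egf a) * d⁄dX R (egf a) =
      egf ((fun n ↦ a (n + 1)) + α • (fun n ↦ n * a n) -
        β • fun n ↦ ∑ p ∈ antidiagonal n, n.choose p.1 * a p.1 * a (p.2 + 1)) := by
    calc _ = d⁄dX R (egf a) + C α * (X * d⁄dX R (egf a)) - C β * (egf a * d⁄dX R (egf a)) := by
          ring
      _ = _ := by
          rw [derivative_egf, X_mul_egf_succ, egf_mul, map_sub, map_add, map_smul, map_smul,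
            smul_eq_C_mul, smul_eq_C_mul]
  have hrhs : 1 + egf a = egf (Pi.single 0 1 + a) := by rw [map_add, egf_single_zero, map_one]
  have hstep (n : ℕ) :
      a (n + 1 + 1) + α * ((n + 1 : ℕ) * a (n + 1)) -
          β * ∑ p ∈ antidiagonal (n + 1), (n + 1).choose p.1 * a p.1 * a (p.2 + 1) =
        (Pi.single 0 1 : ℕ → R) (n + 1) + a (n + 1) ↔
      a (n + 1 + 1) = (1 - ((n + 1 : ℕ) : R) * α) * a (n + 1) +
        β * ∑ k ∈ Icc 1 (n + 1), ((n + 1).choose k : R) * a k * a (n + 1 + 1 - k) := by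
    rw [sum_antidiagonal_choose_mul_succ h0, Pi.single_eq_of_ne n.succ_ne_zero, zero_add]
    constructor <;> intro h <;> linear_combination h
  rw [hlhs, hrhs, egf_injective.eq_iff, funext_iff, ← Nat.and_forall_add_one]
  refine and_congr (by simp [h0]) ⟨fun h n hn ↦ ?_, fun h n ↦ (hstep n).2 (h (n + 1) n.succ_pos)⟩
  obtain ⟨n, rfl⟩ := Nat.exists_eq_add_of_le' hn
  exact (hstep n).1 (h n)
end

section
/- Let R = ℚ[L] be the polynomial ring in one variable L over ℚ, and let φ be the unique formal power series in t + t²·R[[t]] satisfying (1 + L·t − L·φ)·φ′ = 1 + φ. Define aₙ := n!·(coefficient of tⁿ in φ) ∈ ℚ[L]. Then a₁ = 1, a₂ = 1, and for every n ≥ 1, a_{n+1} = aₙ + L·Σ_{i+j=n+1, i≥2, j≥1} binom(n,i)·a_i·a_j. -/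
/-!
Read `φ` as an exponential generating function, `φ = Σ aₙ tⁿ / n!`. Then `φ′` has coefficients
`aₙ₊₁`, `t φ′` has coefficients `n aₙ`, and products become binomial convolutions, so the
differential equation at `tⁿ/n!` says
`aₙ₊₁ + L n aₙ − L Σ_{i+j=n} binom(n,i) aᵢ aⱼ₊₁ = [n = 0] + aₙ`.
For `n = 0` this gives `a₁ = 1`; for `n ≥ 1`, since `a₀ = 0` and `a₁ = 1`, the `i = 1` term of the
convolution cancels `L n aₙ`, and what is left is the recursion. No division is involved, so the
argument works over any commutative ring.
-/

open Finset

namespace Finset.Nat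

theorem sum_antidiagonal_succ_snd_eq_add_sum_filter {M : Type*} [AddCommMonoid M]
    (f : ℕ × ℕ → M) {n : ℕ} (hn : 1 ≤ n) :
    ∑ p ∈ antidiagonal n, f (p.1, p.2 + 1) =
      f (0, n + 1) + f (1, n) +
        ∑ p ∈ (antidiagonal (n + 1)).filter (fun p => 2 ≤ p.1 ∧ 1 ≤ p.2), f p := by
  set S := (antidiagonal (n + 1)).filter (fun p => 1 ≤ p.2)
  have hS : ∑ p ∈ S, f p = ∑ p ∈ antidiagonal n, f (p.1, p.2 + 1) := by
    rw [sum_filter, sum_antidiagonal_succ', if_neg (by simp)]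
    simp
  have hlarge : S.filter (fun p => 2 ≤ p.1) =
      (antidiagonal (n + 1)).filter (fun p => 2 ≤ p.1 ∧ 1 ≤ p.2) := by
    simp only [S, filter_filter, and_comm]
  have hsmall : S.filter (fun p => ¬ 2 ≤ p.1) = {(0, n + 1), (1, n)} := by
    ext ⟨i, k⟩
    simp only [S, mem_filter, HasAntidiagonal.mem_antidiagonal, mem_insert, mem_singleton,
      Prod.mk.injEq]
    omega
  rw [← hS, ← sum_filter_add_sum_filter_not S (fun p => 2 ≤ p.1), hlarge, hsmall,
    sum_pair (by simp), add_comm]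

end Finset.Nat

namespace PowerSeries

variable {R : Type*}

section CommSemiring

variable [CommSemiring R]

noncomputable def egfCoeff (n : ℕ) : R⟦X⟧ →ₗ[R] R := (n.factorial : R) • coeff n

theorem egfCoeff_apply (n : ℕ) (f : R⟦X⟧) : egfCoeff n f = n.factorial * coeff n f := rfl

theorem egfCoeff_one (n : ℕ) : egfCoeff n (1 : R⟦X⟧) = if n = 0 then 1 else 0 := by
  rcases n with _ | n <;> simp [egfCoeff_apply, coeff_one]

theorem egfCoeff_C_mul (n : ℕ) (r : R) (f : R⟦X⟧) : egfCoeff n (C r * f) = r * egfCoeff n f := by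
  rw [egfCoeff_apply, egfCoeff_apply, coeff_C_mul, mul_left_comm]

theorem egfCoeff_derivative (n : ℕ) (f : R⟦X⟧) :
    egfCoeff n (d⁄dX R f) = egfCoeff (n + 1) f := by
  rw [egfCoeff_apply, egfCoeff_apply, coeff_derivative, Nat.factorial_succ]
  push_cast
  ring

theorem egfCoeff_X_mul_derivative (n : ℕ) (f : R⟦X⟧) :
    egfCoeff n (X * d⁄dX R f) = n * egfCoeff n f := by
  rcases n with _ | n
  · simp [egfCoeff_apply]
  · rw [egfCoeff_apply, coeff_succ_X_mul, coeff_derivative, egfCoeff_apply, Nat.factorial_succ]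
    push_cast
    ring

theorem egfCoeff_mul (n : ℕ) (f g : R⟦X⟧) :
    egfCoeff n (f * g) =
      ∑ p ∈ antidiagonal n, n.choose p.1 * egfCoeff p.1 f * egfCoeff p.2 g := by
  rw [egfCoeff_apply, coeff_mul, mul_sum]
  refine sum_congr rfl fun p hp => ?_
  rw [HasAntidiagonal.mem_antidiagonal] at hp
  subst hp
  rw [egfCoeff_apply, egfCoeff_apply, Nat.choose_symm_add,
    ← Nat.add_choose_mul_factorial_mul_factorial p.1 p.2]
  push_cast
  ring

end CommSemiring

section ODE

variable [CommRing R] {L : R} {φ : R⟦X⟧}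

theorem egfCoeff_of_ode (heq : (1 + C L * X - C L * φ) * d⁄dX R φ = 1 + φ) (n : ℕ) :
    egfCoeff (n + 1) φ + L * (n * egfCoeff n φ)
      - L * ∑ p ∈ antidiagonal n, n.choose p.1 * egfCoeff p.1 φ * egfCoeff (p.2 + 1) φ
      = (if n = 0 then 1 else 0) + egfCoeff n φ := by
  have h := congrArg (egfCoeff n) heq
  rw [sub_mul, add_mul, one_mul, mul_assoc, mul_assoc, map_sub, map_add, egfCoeff_C_mul,
    egfCoeff_C_mul, egfCoeff_X_mul_derivative, egfCoeff_mul, map_add, egfCoeff_one,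
    egfCoeff_derivative] at h
  simpa only [egfCoeff_derivative] using h

theorem egfCoeff_one_of_ode (h0 : coeff 0 φ = 0)
    (heq : (1 + C L * X - C L * φ) * d⁄dX R φ = 1 + φ) : egfCoeff 1 φ = 1 := by
  simpa [egfCoeff_apply, h0] using egfCoeff_of_ode heq 0

theorem egfCoeff_succ_of_ode (h0 : coeff 0 φ = 0)
    (heq : (1 + C L * X - C L * φ) * d⁄dX R φ = 1 + φ) {n : ℕ} (hn : 1 ≤ n) :
    egfCoeff (n + 1) φ = egfCoeff n φ + L *
      ∑ p ∈ (antidiagonal (n + 1)).filter (fun p => 2 ≤ p.1 ∧ 1 ≤ p.2),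
        (n.choose p.1 : R) * egfCoeff p.1 φ * egfCoeff p.2 φ := by
  have ha0 : egfCoeff 0 φ = 0 := by rw [egfCoeff_apply, h0, mul_zero]
  have h := egfCoeff_of_ode heq n
  rw [Finset.Nat.sum_antidiagonal_succ_snd_eq_add_sum_filter
    (fun p => (n.choose p.1 : R) * egfCoeff p.1 φ * egfCoeff p.2 φ) hn,
    if_neg (by omega), ha0, egfCoeff_one_of_ode h0 heq, Nat.choose_one_right] at h
  linear_combination h

end ODE

end PowerSeries

open Polynomial in
set_option linter.deprecated false in
theorem grothendieck_class_recursion_M0n_general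
    (φ : PowerSeries (Polynomial ℚ))
    (h0 : PowerSeries.coeff 0 φ = 0)
    (heq : (1 + PowerSeries.C (X : ℚ[X]) * PowerSeries.X
        - PowerSeries.C (X : ℚ[X]) * φ) * φ.derivativeFun = 1 + φ)
    (a : ℕ → ℚ[X])
    (ha : ∀ n, a n = (n.factorial : ℚ[X]) * PowerSeries.coeff n φ) :
    a 1 = 1 ∧ a 2 = 1 ∧ ∀ n : ℕ, 1 ≤ n →
      a (n + 1) = a n + X *
        ∑ p ∈ (Finset.HasAntidiagonal.antidiagonal (n + 1)).filter (fun p => 2 ≤ p.1 ∧ 1 ≤ p.2),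
          (n.choose p.1 : ℚ[X]) * a p.1 * a p.2 := by
  obtain rfl : a = fun n => PowerSeries.egfCoeff n φ := funext ha
  have ha1 := PowerSeries.egfCoeff_one_of_ode h0 heq
  refine ⟨ha1, ?_, fun n hn => PowerSeries.egfCoeff_succ_of_ode h0 heq hn⟩
  have hempty : (antidiagonal 2).filter (fun p : ℕ × ℕ => 2 ≤ p.1 ∧ 1 ≤ p.2) = ∅ := by decide
  simpa [hempty, ha1] using PowerSeries.egfCoeff_succ_of_ode h0 heq (le_refl 1)

open Polynomial in
/-- For `R = ℚ[L]` and `φ` the unique series in `t + t²·R[[t]]` with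
`(1 + L·t − L·φ)·φ′ = 1 + φ`, setting `aₙ := n!·(coeff of tⁿ in φ)` one has `a 1 = 1`,
`a 2 = 1`, and for all `n ≥ 1`,
`a (n+1) = a n + L·Σ_{i+j=n+1, i≥2, j≥1} binom(n,i)·a_i·a_j`. -/
theorem grothendieck_class_recursion_M0n
    (φ : PowerSeries (Polynomial ℚ))
    (h0 : PowerSeries.coeff 0 φ = 0) (h1 : PowerSeries.coeff 1 φ = 1)
    (heq : (1 + PowerSeries.C (X : ℚ[X]) * PowerSeries.X
        - PowerSeries.C (X : ℚ[X]) * φ) * φ.derivativeFun = 1 + φ)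
    (a : ℕ → ℚ[X])
    (ha : ∀ n, a n = (n.factorial : ℚ[X]) * PowerSeries.coeff n φ) :
    a 1 = 1 ∧ a 2 = 1 ∧ ∀ n : ℕ, 1 ≤ n →
      a (n + 1) = a n + X *
        ∑ p ∈ (Finset.HasAntidiagonal.antidiagonal (n + 1)).filter (fun p => 2 ≤ p.1 ∧ 1 ≤ p.2),
          (n.choose p.1 : ℚ[X]) * a p.1 * a p.2 :=
  grothendieck_class_recursion_M0n_general φ h0 heq a ha
end

section
/- Fix an integer d ≥ 1. Let R = ℚ[L] and set π_k := Σ_{i=0}^{k} L^i ∈ ℚ[L] for k ≥ 0 (with the convention π_{−1} = 0). Let ψ be the unique formal power series in t + t²·R[[t]] satisfying (1 + L^d·t − L·π_{d−1}·ψ)·ψ′ = 1 + ψ, and define bₙ := n!·(coefficient of tⁿ in ψ) ∈ ℚ[L]. Then b₁ = 1, b₂ = π_{d−1}, and for every n ≥ 2, b_{n+1} = (π_d + n·L·π_{d−2})·bₙ + L·π_{d−1}·Σ_{i+j=n+1, 2≤i≤n−1} binom(n,i)·b_i·b_j. -/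
/-!
Writing `ψ = Σ bₙ tⁿ / n!`, differentiation shifts `bₙ`, multiplication by `t ∂ₜ` multiplies `bₙ`
by `n`, and products become binomial convolutions. Reading off the coefficient of `tⁿ / n!` in
`ψ′ + L^d t ψ′ - L π_{d-1} ψ ψ′ = 1 + ψ` thus expresses `b_{n+1}` through `b_n` and the convolution
`Σ_k binom(n,k) b_k b_{n+1-k}`, whose terms with `k ∈ {0, 1, n}` are `0, n bₙ, bₙ`. The stated
coefficients come from `1 + L π_{d-1} = π_d` and `L π_{d-1} - L^d = L π_{d-2}`.
-/

open Finset

namespace Finset.Nat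

variable {M : Type*} [AddCommMonoid M]

theorem sum_filter_antidiagonal_succ_eq_sum_Ico (n : ℕ) (f : ℕ → ℕ → M) :
    ∑ p ∈ (antidiagonal (n + 1)).filter (fun p => 2 ≤ p.1 ∧ p.1 ≤ n - 1), f p.1 p.2 =
      ∑ k ∈ Ico 2 n, f k (n + 1 - k) := by
  rw [sum_filter, Nat.sum_antidiagonal_eq_sum_range_succ
    (fun i j => if 2 ≤ i ∧ i ≤ n - 1 then f i j else 0), ← sum_filter]
  congr 1
  ext k
  simp only [mem_filter, mem_range, mem_Ico]
  omega

theorem sum_antidiagonal_succ_snd_eq (n : ℕ) (hn : 2 ≤ n) (f : ℕ → ℕ → M) :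
    ∑ p ∈ antidiagonal n, f p.1 (p.2 + 1) =
      f 0 (n + 1) + f 1 n + f n 1 + ∑ k ∈ Ico 2 n, f k (n + 1 - k) := by
  rw [Nat.sum_antidiagonal_eq_sum_range_succ (fun i j => f i (j + 1)), range_eq_Ico,
    sum_Ico_succ_top (Nat.zero_le n), sum_eq_sum_Ico_succ_bot (by omega),
    sum_eq_sum_Ico_succ_bot (by omega), Nat.sub_self, Nat.sub_zero,
    show n - 1 + 1 = n by omega]
  have hshift : ∑ k ∈ Ico 2 n, f k (n - k + 1) = ∑ k ∈ Ico 2 n, f k (n + 1 - k) :=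
    sum_congr rfl fun k hk => by rw [mem_Ico] at hk; rw [show n - k + 1 = n + 1 - k by omega]
  rw [hshift]
  abel

end Finset.Nat

namespace PowerSeries

section CommSemiring

variable {R : Type*} [CommSemiring R]

noncomputable def factorialCoeff (f : R⟦X⟧) (n : ℕ) : R := n.factorial * coeff n f

theorem factorialCoeff_zero_eq_coeff_zero (f : R⟦X⟧) : factorialCoeff f 0 = coeff 0 f := by
  simp [factorialCoeff]

theorem factorialCoeff_one_eq_coeff_one (f : R⟦X⟧) : factorialCoeff f 1 = coeff 1 f := by
  simp [factorialCoeff]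

theorem factorialCoeff_add (f g : R⟦X⟧) (n : ℕ) :
    factorialCoeff (f + g) n = factorialCoeff f n + factorialCoeff g n := by
  simp only [factorialCoeff, map_add, mul_add]

theorem factorialCoeff_C_mul (r : R) (f : R⟦X⟧) (n : ℕ) :
    factorialCoeff (C r * f) n = r * factorialCoeff f n := by
  simp only [factorialCoeff, coeff_C_mul]
  ring

theorem factorialCoeff_one_of_ne_zero {n : ℕ} (hn : n ≠ 0) : factorialCoeff (1 : R⟦X⟧) n = 0 := by
  simp [factorialCoeff, coeff_one, hn]

theorem factorialCoeff_derivative (f : R⟦X⟧) (n : ℕ) :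
    factorialCoeff (d⁄dX R f) n = factorialCoeff f (n + 1) := by
  simp only [factorialCoeff, coeff_derivative, Nat.factorial_succ]
  push_cast
  ring

theorem factorialCoeff_X_mul_derivative (f : R⟦X⟧) (n : ℕ) :
    factorialCoeff (X * d⁄dX R f) n = n * factorialCoeff f n := by
  cases n with
  | zero => simp [factorialCoeff]
  | succ m =>
    simp only [factorialCoeff, coeff_succ_X_mul, coeff_derivative, Nat.factorial_succ]
    push_cast
    ring

theorem factorialCoeff_mul (f g : R⟦X⟧) (n : ℕ) :
    factorialCoeff (f * g) n =
      ∑ p ∈ antidiagonal n, n.choose p.1 * factorialCoeff f p.1 * factorialCoeff g p.2 := by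
  rw [factorialCoeff, coeff_mul, mul_sum]
  refine sum_congr rfl fun p hp => ?_
  rw [HasAntidiagonal.mem_antidiagonal] at hp
  have hfac := Nat.add_choose_mul_factorial_mul_factorial p.1 p.2
  rw [← Nat.choose_symm_add, hp] at hfac
  simp only [factorialCoeff, ← hfac]
  push_cast
  ring

end CommSemiring

theorem factorialCoeff_succ_of_mul_derivative_eq {R : Type*} [CommRing R] {a c : R}
    {ψ : R⟦X⟧} (h : (1 + C c * X - C a * ψ) * d⁄dX R ψ = 1 + ψ) {n : ℕ} (hn : n ≠ 0) :
    factorialCoeff ψ (n + 1) = (1 - c * n) * factorialCoeff ψ n +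
      a * ∑ p ∈ antidiagonal n,
        n.choose p.1 * factorialCoeff ψ p.1 * factorialCoeff ψ (p.2 + 1) := by
  have h' : d⁄dX R ψ + C c * (X * d⁄dX R ψ) = 1 + ψ + C a * (ψ * d⁄dX R ψ) := by
    linear_combination h
  have hcoeff := congrArg (factorialCoeff · n) h'
  simp only [factorialCoeff_add, factorialCoeff_C_mul, factorialCoeff_derivative,
    factorialCoeff_X_mul_derivative, factorialCoeff_one_of_ne_zero hn] at hcoeff
  simp only [factorialCoeff_mul, factorialCoeff_derivative] at hcoeff
  linear_combination hcoeff

end PowerSeries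

open Polynomial in
/-- Fix `d ≥ 1`, let `π_k := Σ_{i=0}^{k} L^i` (with `π_{−1} = 0`; below
`π_{k}` is written as `Σ_{i ∈ range (k+1)} L^i`, and `π_{d−2}` as `Σ_{i ∈ range (d−1)} L^i`,
which is `0` when `d = 1`). Let `ψ` be the unique solution in `t + t²·ℚ[L][[t]]` of
`(1 + L^d·t − L·π_{d−1}·ψ)·ψ′ = 1 + ψ` and `bₙ := n!·(coeff of tⁿ in ψ)`. Then `b 1 = 1`,
`b 2 = π_{d−1}`, and for all `n ≥ 2`,
`b (n+1) = (π_d + n·L·π_{d−2})·b n + L·π_{d−1}·Σ_{i+j=n+1, 2≤i≤n−1} binom(n,i)·b_i·b_j`. -/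
theorem grothendieck_class_recursion_Tdn
    (d : ℕ) (hd : 1 ≤ d)
    (ψ : PowerSeries (Polynomial ℚ))
    (h0 : PowerSeries.coeff 0 ψ = 0) (h1 : PowerSeries.coeff 1 ψ = 1)
    (heq : (1 + PowerSeries.C ((X : ℚ[X]) ^ d) * PowerSeries.X
        - PowerSeries.C ((X : ℚ[X]) * ∑ i ∈ Finset.range d, (X : ℚ[X]) ^ i) * ψ)
        * ψ.derivativeFun = 1 + ψ)
    (b : ℕ → ℚ[X])
    (hb : ∀ n, b n = (n.factorial : ℚ[X]) * PowerSeries.coeff n ψ) :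
    b 1 = 1 ∧ b 2 = (∑ i ∈ Finset.range d, (X : ℚ[X]) ^ i) ∧
    ∀ n : ℕ, 2 ≤ n →
      b (n + 1) = ((∑ i ∈ Finset.range (d + 1), (X : ℚ[X]) ^ i)
            + (n : ℚ[X]) * X * ∑ i ∈ Finset.range (d - 1), (X : ℚ[X]) ^ i) * b n
        + X * (∑ i ∈ Finset.range d, (X : ℚ[X]) ^ i) *
          ∑ p ∈ (Finset.HasAntidiagonal.antidiagonal (n + 1)).filter (fun p => 2 ≤ p.1 ∧ p.1 ≤ n - 1),
            (n.choose p.1 : ℚ[X]) * b p.1 * b p.2 := by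
  obtain rfl : b = PowerSeries.factorialCoeff ψ := funext hb
  have hb0 := (PowerSeries.factorialCoeff_zero_eq_coeff_zero ψ).trans h0
  have hb1 := (PowerSeries.factorialCoeff_one_eq_coeff_one ψ).trans h1
  have hrec {n : ℕ} (hn : n ≠ 0) := PowerSeries.factorialCoeff_succ_of_mul_derivative_eq heq hn
  set b := PowerSeries.factorialCoeff ψ
  obtain ⟨e, rfl⟩ : ∃ e, d = e + 1 := ⟨d - 1, by omega⟩
  have hπ_succ := geom_sum_succ (x := (X : ℚ[X])) (n := e + 1)
  have hπ_top := sum_range_succ (fun i => (X : ℚ[X]) ^ i) e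
  refine ⟨hb1, ?_, fun n hn => ?_⟩
  · have hb2 := hrec one_ne_zero
    rw [show antidiagonal 1 = {(0, 1), (1, 0)} by decide, sum_pair (by decide)] at hb2
    simp only [zero_add, Nat.choose_self, hb0, hb1] at hb2
    linear_combination hb2 - hπ_succ + sum_range_succ (fun i => (X : ℚ[X]) ^ i) (e + 1)
  · rw [Nat.sum_filter_antidiagonal_succ_eq_sum_Ico n (fun i j => (n.choose i : ℚ[X]) * b i * b j),
      Nat.add_sub_cancel, hrec (by omega),
      Nat.sum_antidiagonal_succ_snd_eq n hn (fun i j => (n.choose i : ℚ[X]) * b i * b j),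
      hb0, hb1, Nat.choose_zero_right, Nat.choose_one_right, Nat.choose_self]
    linear_combination (n * X * hπ_top - hπ_succ) * b n
end

section
/- Fix an integer d ≥ 1, let R = ℚ[L], set π_{d−1} := Σ_{i=0}^{d−1} L^i, and let ψ be the unique formal power series in t + t²·R[[t]] satisfying (1 + L^d·t − L·π_{d−1}·ψ)·ψ′ = 1 + ψ, with bₙ := n!·(coefficient of tⁿ in ψ) ∈ ℚ[L]. Then for every n ≥ 1 there exists a finitely supported function c : ℕ → ℕ such that bₙ = Σ_k c(k)·(L − 1)^k in ℚ[L]. In particular each bₙ lies in ℤ[L] and, written as a polynomial in T = L − 1, has nonnegative integer coefficients. -/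
/-!
Comparing coefficients of `tᵐ⁺¹` in the differential equation gives, with `P = L·π_{d−1}`,
`b_{m+2} + (m+1)·L^d·b_{m+1} = b_{m+1} + P·∑_{i+j=m+1} C(m+1,i)·b_i·b_{j+1}`.
The summand `i = 1` is `(m+1)·P·b_{m+1}`, and it absorbs the only negative term because
`P − L^d = L·π_{d−2}` has nonnegative coefficients. Since `L = T + 1`, induction shows that every
`bₙ` lies in the subsemiring `ℕ[T]` of `ℚ[L]`.
-/

open Finset

theorem exists_finsupp_eq_sum_pow_of_mem_adjoin_nat {R : Type*} [CommSemiring R] {t q : R}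
    (hq : q ∈ Algebra.adjoin ℕ {t}) : ∃ c : ℕ →₀ ℕ, q = c.sum fun k m => (m : R) * t ^ k := by
  rw [Algebra.adjoin_singleton_eq_range_aeval] at hq
  obtain ⟨p, rfl⟩ := hq
  exact ⟨p.toFinsupp.coeff, by simp [Polynomial.aeval_def, Polynomial.eval₂_eq_sum,
    Polynomial.sum_def, Finsupp.sum]; rfl⟩

section Recurrence

open PowerSeries

variable {R : Type*} [CommRing R] {A B : R} {ψ : R⟦X⟧}

theorem coeff_recurrence_of_ode (hψ : (1 + C A * X - C B * ψ) * d⁄dX R ψ = 1 + ψ) (m : ℕ) :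
    coeff (m + 2) ψ * (m + 2) + A * (coeff (m + 1) ψ * (m + 1)) =
      coeff (m + 1) ψ + B * ∑ p ∈ antidiagonal (m + 1),
        coeff p.1 ψ * (coeff (p.2 + 1) ψ * (p.2 + 1)) := by
  have h := congrArg (coeff (m + 1)) (by linear_combination hψ :
    d⁄dX R ψ + C A * (X * d⁄dX R ψ) = 1 + ψ + C B * (ψ * d⁄dX R ψ))
  rw [map_add, map_add, map_add, coeff_C_mul, coeff_C_mul, coeff_succ_X_mul, coeff_one,
    coeff_mul] at h
  simp only [coeff_derivative] at h
  convert h using 2 <;> push_cast <;> ring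

open Nat in
theorem factorial_mul_coeff_recurrence_of_ode
    (hψ : (1 + C A * X - C B * ψ) * d⁄dX R ψ = 1 + ψ) (b : ℕ → R)
    (hb : ∀ n, b n = n ! * coeff n ψ) (m : ℕ) :
    b (m + 2) + (m + 1) * A * b (m + 1) =
      b (m + 1) + B * ∑ p ∈ antidiagonal (m + 1),
        ((m + 1).choose p.1 : R) * (b p.1 * b (p.2 + 1)) := by
  have hterm : ∀ p ∈ antidiagonal (m + 1), ((m + 1).choose p.1 : R) * (b p.1 * b (p.2 + 1)) =
      (m + 1)! * (coeff p.1 ψ * (coeff (p.2 + 1) ψ * (p.2 + 1))) := by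
    rintro ⟨i, j⟩ hij
    rw [← HasAntidiagonal.mem_antidiagonal.mp hij, hb, hb, factorial_succ j,
      ← Nat.add_choose_mul_factorial_mul_factorial i j, Nat.choose_symm_add]
    push_cast
    ring
  rw [sum_congr rfl hterm, ← mul_sum, hb, hb, factorial_succ (m + 1)]
  push_cast
  linear_combination ((m + 1)! : R) * coeff_recurrence_of_ode hψ m

end Recurrence

theorem mem_of_binomial_recurrence {R σ : Type*} [CommRing R] [SetLike σ R]
    [SubsemiringClass σ R] (S : σ) {A B : R} (hB : B ∈ S) (hBA : B - A ∈ S) (b : ℕ → R)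
    (h0 : b 0 = 0) (h1 : b 1 = 1)
    (hrec : ∀ m : ℕ, b (m + 2) + (m + 1) * A * b (m + 1) =
      b (m + 1) + B * ∑ p ∈ antidiagonal (m + 1),
        ((m + 1).choose p.1 : R) * (b p.1 * b (p.2 + 1))) (n : ℕ) :
    b n ∈ S := by
  induction n using Nat.strong_induction_on with
  | _ n ih =>
  match n with
  | 0 => simp [h0]
  | 1 => simp [h1]
  | m + 2 =>
    have h1m : ((1 : ℕ), m) ∈ antidiagonal (m + 1) := by
      rw [HasAntidiagonal.mem_antidiagonal]; omega
    have hsplit := hrec m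
    rw [← Finset.add_sum_erase _ _ h1m, Nat.choose_one_right, h1] at hsplit
    rw [show b (m + 2) = b (m + 1) + (m + 1 : ℕ) * (B - A) * b (m + 1) + B *
        ∑ p ∈ (antidiagonal (m + 1)).erase (1, m),
          ((m + 1).choose p.1 : R) * (b p.1 * b (p.2 + 1)) by
      push_cast at hsplit ⊢; linear_combination hsplit]
    refine add_mem (add_mem (ih _ (by omega)) ?_) (mul_mem hB (sum_mem ?_))
    · exact mul_mem (mul_mem (natCast_mem S _) hBA) (ih _ (by omega))
    rintro ⟨i, j⟩ hij
    rw [Finset.mem_erase, HasAntidiagonal.mem_antidiagonal] at hij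
    rcases i with _ | i
    · simp [h0]
    · exact mul_mem (natCast_mem S _) (mul_mem (ih _ (by omega)) (ih _ (by omega)))

open Polynomial in
/-- Fix `d ≥ 1`, let `π_{d−1} := Σ_{i=0}^{d−1} L^i`, let `ψ` be the unique
solution in `t + t²·ℚ[L][[t]]` of `(1 + L^d·t − L·π_{d−1}·ψ)·ψ′ = 1 + ψ`, and set
`bₙ := n!·(coeff of tⁿ in ψ)`. Then for every `n ≥ 1` there is a finitely supported
`c : ℕ → ℕ` with `bₙ = Σ_k c(k)·(L − 1)^k`: each `bₙ`, written in `T = L − 1`, has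
nonnegative integer coefficients. -/
theorem grothendieck_class_Tdn_torified
    (d : ℕ) (hd : 1 ≤ d)
    (ψ : PowerSeries (Polynomial ℚ))
    (h0 : PowerSeries.coeff 0 ψ = 0) (h1 : PowerSeries.coeff 1 ψ = 1)
    (heq : (1 + PowerSeries.C ((X : ℚ[X]) ^ d) * PowerSeries.X
        - PowerSeries.C ((X : ℚ[X]) * ∑ i ∈ Finset.range d, (X : ℚ[X]) ^ i) * ψ)
        * ψ.derivativeFun = 1 + ψ)
    (b : ℕ → ℚ[X])
    (hb : ∀ n, b n = (n.factorial : ℚ[X]) * PowerSeries.coeff n ψ) :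
    ∀ n : ℕ, 1 ≤ n → ∃ c : ℕ →₀ ℕ,
      b n = c.sum fun k m => (m : ℚ[X]) * (X - 1) ^ k := by
  intro n _
  set S := Algebra.adjoin ℕ {(X - 1 : ℚ[X])}
  have hX : (X : ℚ[X]) ∈ S := by
    simpa using add_mem (Algebra.self_mem_adjoin_singleton ℕ (X - 1 : ℚ[X])) (one_mem S)
  have hgeom (k : ℕ) : X * ∑ i ∈ range k, (X : ℚ[X]) ^ i ∈ S :=
    mul_mem hX (sum_mem fun i _ => pow_mem hX i)
  obtain ⟨e, rfl⟩ : ∃ e, d = e + 1 := ⟨d - 1, by omega⟩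
  have hgeom_sub :
      X * ∑ i ∈ range (e + 1), (X : ℚ[X]) ^ i - X ^ (e + 1) = X * ∑ i ∈ range e, X ^ i := by
    rw [sum_range_succ]; ring
  have hbS := mem_of_binomial_recurrence S (hgeom (e + 1)) (hgeom_sub ▸ hgeom e) b
    (by simp [hb, h0]) (by simp [hb, h1]) (factorial_mul_coeff_recurrence_of_ode heq b hb) n
  exact exists_finsupp_eq_sum_pow_of_mem_adjoin_nat hbS
end
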